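/- Let r ≥ 2 be an integer. For q = 1, 2 let x^{(q)}_k = a_q + k·h_q be uniform nodes with a_q ∈ ℝ and h_q > 0, let f : ℝ² → ℝ, fix indices i_1, i_2, and let x_{1/2} = (a_1 + (i_1 − 1/2)h_1, a_2 + (i_2 − 1/2)h_2) be the midpoint of the central cell. Fix an integer l with r ≤ l ≤ 2r−2 and a pair j = (j₁, j₂) with 0 ≤ j₁, j₂ ≤ 2r−2−l. Let p^{l+1}_j be the tensor-product Lagrange interpolant of f on {x^{(1)}_{i_1-r+j_1}, …, x^{(1)}_{i_1-r+j_1+l+1}} × {x^{(2)}_{i_2-r+j_2}, …, x^{(2)}_{i_2-r+j_2+l+1}}, and for each v ∈ {0,1}² let p^{l}_{j+v} be the tensor-product Lagrange interpolant of f on {x^{(1)}_{i_1-r+j_1+v_1}, …, x^{(1)}_{i_1-r+j_1+v_1+l}} × {x^{(2)}_{i_2-r+j_2+v_2}, …, x^{(2)}_{i_2-r+j_2+v_2+l}}. Then p^{l+1}_j(x_{1/2}) = Σ_{v∈{0,1}²} C^l_{j_1,j_1+v_1} · C^l_{j_2,j_2+v_2} · p^{l}_{j+v}(x_{1/2}),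 where C^l_{k,k} = (2(l−r+k+1)+1)/(2(l+1)) and C^l_{k,k+1} = (2(r−k)−1)/(2(l+1)). -/
import Mathlib


/-- Value at `(u, v)` of the tensor-product Lagrange interpolant of `f` on the
Cartesian product of the node sets `{x1 k : k ∈ s1}` and `{x2 k : k ∈ s2}`. -/
noncomputable def tlag2 (s1 s2 : Finset ℤ) (x1 x2 : ℤ → ℝ) (f : ℝ → ℝ → ℝ)
    (u v : ℝ) : ℝ :=
  ∑ k1 ∈ s1, ∑ k2 ∈ s2,
    f (x1 k1) (x2 k2) *
      ((∏ m ∈ s1.erase k1, (u - x1 m) / (x1 k1 - x1 m)) *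
       (∏ m ∈ s2.erase k2, (v - x2 m) / (x2 k2 - x2 m)))


noncomputable def lag1 (s : Finset ℤ) (x : ℤ → ℝ) (g : ℤ → ℝ) (u : ℝ) : ℝ :=
  ∑ k ∈ s, g k * ∏ m ∈ s.erase k, (u - x m) / (x k - x m)

open Finset in
lemma neville (A B : ℤ) (hAB : A < B) (x : ℤ → ℝ)
    (hx : ∀ k m : ℤ, k ≠ m → x k ≠ x m) (u : ℝ) (hu : ∀ m, u ≠ x m) (g : ℤ → ℝ) :
    lag1 (Finset.Icc A B) x g u
      = (x B - u) / (x B - x A) * lag1 (Finset.Icc A (B-1)) x g u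
        + (u - x A) / (x B - x A) * lag1 (Finset.Icc (A+1) B) x g u := by
  classical
  set α := (x B - u) / (x B - x A) with hα
  set β := (u - x A) / (x B - x A) with hβ
  have hL : α * lag1 (Icc A (B-1)) x g u
      = ∑ k ∈ Icc A B, (if k ∈ Icc A (B-1) then
          α * (g k * ∏ m ∈ (Icc A (B-1)).erase k, (u - x m) / (x k - x m)) else 0) := by
    rw [lag1, Finset.mul_sum]
    symm
    rw [Finset.sum_ite_mem,
      show Finset.Icc A B ∩ Finset.Icc A (B-1) = Finset.Icc A (B-1) by
        ext m; simp only [Finset.mem_inter, Finset.mem_Icc]; omega]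
  have hR : β * lag1 (Icc (A+1) B) x g u
      = ∑ k ∈ Icc A B, (if k ∈ Icc (A+1) B then
          β * (g k * ∏ m ∈ (Icc (A+1) B).erase k, (u - x m) / (x k - x m)) else 0) := by
    rw [lag1, Finset.mul_sum]
    symm
    rw [Finset.sum_ite_mem,
      show Finset.Icc A B ∩ Finset.Icc (A+1) B = Finset.Icc (A+1) B by
        ext m; simp only [Finset.mem_inter, Finset.mem_Icc]; omega]
  rw [hL, hR, lag1, ← Finset.sum_add_distrib]
  refine Finset.sum_congr rfl fun k hk => ?_
  rw [Finset.mem_Icc] at hk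
  obtain ⟨hAk, hkB⟩ := hk
  have hxBA : x B - x A ≠ 0 := sub_ne_zero.mpr (hx B A (by omega))
  by_cases hkB' : k = B
  · have h1 : (Icc A B).erase k = insert A ((Icc (A+1) B).erase k) := by
      ext m; simp only [mem_erase, mem_insert, mem_Icc]; omega
    have h2 : A ∉ (Icc (A+1) B).erase k := by
      simp only [mem_erase, mem_Icc]; omega
    rw [h1, Finset.prod_insert h2]
    rw [if_neg (by simp only [mem_Icc]; omega), if_pos (by simp only [mem_Icc]; omega)]
    rw [hβ, hkB']
    field_simp
    ring
  · by_cases hkA' : k = A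
    · have h1 : (Icc A B).erase k = insert B ((Icc A (B-1)).erase k) := by
        ext m; simp only [mem_erase, mem_insert, mem_Icc]; omega
      have h2 : B ∉ (Icc A (B-1)).erase k := by
        simp only [mem_erase, mem_Icc]; omega
      rw [h1, Finset.prod_insert h2]
      rw [if_pos (by simp only [mem_Icc]; omega), if_neg (by simp only [mem_Icc]; omega)]
      rw [hα, hkA']
      rw [show x B - u = -(u - x B) by ring, show x B - x A = -(x A - x B) by ring,
        neg_div_neg_eq]
      ring
    · -- interior case
      have hkAlt : A < k := lt_of_le_of_ne hAk (Ne.symm hkA')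
      have hkBlt : k < B := lt_of_le_of_ne hkB hkB'
      have e1 : (Icc A B).erase k = insert B ((Icc A (B-1)).erase k) := by
        ext m; simp only [mem_erase, mem_insert, mem_Icc]; omega
      have e1' : B ∉ (Icc A (B-1)).erase k := by
        simp only [mem_erase, mem_Icc]; omega
      have e2 : (Icc A B).erase k = insert A ((Icc (A+1) B).erase k) := by
        ext m; simp only [mem_erase, mem_insert, mem_Icc]; omega
      have e2' : A ∉ (Icc (A+1) B).erase k := by
        simp only [mem_erase, mem_Icc]; omega
      rw [if_pos (by simp [mem_Icc]; omega), if_pos (by simp [mem_Icc]; omega)]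
      set PL := ∏ m ∈ (Icc A (B-1)).erase k, (u - x m) / (x k - x m) with hPL
      set PR := ∏ m ∈ (Icc (A+1) B).erase k, (u - x m) / (x k - x m) with hPR
      have hbig1 : ∏ m ∈ (Icc A B).erase k, (u - x m) / (x k - x m)
          = (u - x B) / (x k - x B) * PL := by rw [e1, Finset.prod_insert e1']
      have hbig2 : ∏ m ∈ (Icc A B).erase k, (u - x m) / (x k - x m)
          = (u - x A) / (x k - x A) * PR := by rw [e2, Finset.prod_insert e2']
      rw [hbig1]
      have huA : u - x A ≠ 0 := sub_ne_zero.mpr (hu A)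
      have huB : u - x B ≠ 0 := sub_ne_zero.mpr (hu B)
      have hkA2 : x k - x A ≠ 0 := sub_ne_zero.mpr (hx k A (by omega))
      have hkB2 : x k - x B ≠ 0 := sub_ne_zero.mpr (hx k B (by omega))
      have hFB : (u - x B) / (x k - x B) ≠ 0 := div_ne_zero huB hkB2
      have hFA : (u - x A) / (x k - x A) ≠ 0 := div_ne_zero huA hkA2
      have hPReq : PR = (u - x B) / (x k - x B) * PL / ((u - x A) / (x k - x A)) := by
        rw [eq_div_iff hFA]
        rw [mul_comm PR _, ← hbig2, hbig1]
      rw [hPReq, hα, hβ]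
      field_simp
      ring

lemma lag1_linear (s : Finset ℤ) (x : ℤ → ℝ) (a b : ℝ) (p q : ℤ → ℝ) (u : ℝ) :
    lag1 s x (fun k => a * p k + b * q k) u
      = a * lag1 s x p u + b * lag1 s x q u := by
  simp only [lag1, Finset.mul_sum, ← Finset.sum_add_distrib]
  exact Finset.sum_congr rfl fun k _ => by ring

lemma tlag2_eq (s1 s2 : Finset ℤ) (x1 x2 : ℤ → ℝ) (f : ℝ → ℝ → ℝ) (u v : ℝ) :
    tlag2 s1 s2 x1 x2 f u v
      = lag1 s1 x1 (fun k1 => lag1 s2 x2 (fun k2 => f (x1 k1) (x2 k2)) v) u := by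
  simp only [tlag2, lag1, Finset.sum_mul]
  exact Finset.sum_congr rfl fun k1 _ =>
    Finset.sum_congr rfl fun k2 _ => by ring

theorem stmt11 (r : ℤ) (hr : 2 ≤ r) (a1 a2 h1 h2 : ℝ) (hh1 : 0 < h1) (hh2 : 0 < h2)
    (f : ℝ → ℝ → ℝ) (i1 i2 l j1 j2 : ℤ)
    (hl : r ≤ l) (hl2 : l ≤ 2 * r - 2)
    (hj1 : 0 ≤ j1) (hj1' : j1 ≤ 2 * r - 2 - l) (hj2 : 0 ≤ j2) (hj2' : j2 ≤ 2 * r - 2 - l)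
    (x1 x2 : ℤ → ℝ) (hx1 : ∀ m : ℤ, x1 m = a1 + (m : ℝ) * h1)
    (hx2 : ∀ m : ℤ, x2 m = a2 + (m : ℝ) * h2)
    (m1 m2 : ℝ) (hm1 : m1 = a1 + ((i1 : ℝ) - 1 / 2) * h1)
    (hm2 : m2 = a2 + ((i2 : ℝ) - 1 / 2) * h2) :
    tlag2 (Finset.Icc (i1 - r + j1) (i1 - r + j1 + l + 1))
        (Finset.Icc (i2 - r + j2) (i2 - r + j2 + l + 1)) x1 x2 f m1 m2 =
      ((2 * ((l : ℝ) - r + j1 + 1) + 1) / (2 * ((l : ℝ) + 1))) *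
          ((2 * ((l : ℝ) - r + j2 + 1) + 1) / (2 * ((l : ℝ) + 1))) *
          tlag2 (Finset.Icc (i1 - r + j1) (i1 - r + j1 + l))
            (Finset.Icc (i2 - r + j2) (i2 - r + j2 + l)) x1 x2 f m1 m2 +
        ((2 * ((r : ℝ) - j1) - 1) / (2 * ((l : ℝ) + 1))) *
          ((2 * ((l : ℝ) - r + j2 + 1) + 1) / (2 * ((l : ℝ) + 1))) *
          tlag2 (Finset.Icc (i1 - r + j1 + 1) (i1 - r + j1 + l + 1))
            (Finset.Icc (i2 - r + j2) (i2 - r + j2 + l)) x1 x2 f m1 m2 +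
        ((2 * ((l : ℝ) - r + j1 + 1) + 1) / (2 * ((l : ℝ) + 1))) *
          ((2 * ((r : ℝ) - j2) - 1) / (2 * ((l : ℝ) + 1))) *
          tlag2 (Finset.Icc (i1 - r + j1) (i1 - r + j1 + l))
            (Finset.Icc (i2 - r + j2 + 1) (i2 - r + j2 + l + 1)) x1 x2 f m1 m2 +
        ((2 * ((r : ℝ) - j1) - 1) / (2 * ((l : ℝ) + 1))) *
          ((2 * ((r : ℝ) - j2) - 1) / (2 * ((l : ℝ) + 1))) *
          tlag2 (Finset.Icc (i1 - r + j1 + 1) (i1 - r + j1 + l + 1))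
            (Finset.Icc (i2 - r + j2 + 1) (i2 - r + j2 + l + 1)) x1 x2 f m1 m2 := by
  have hx1' : ∀ k m : ℤ, k ≠ m → x1 k ≠ x1 m := by
    intro k m hkm h
    rw [hx1, hx1] at h
    have hkm' : (k : ℝ) = m :=
      mul_right_cancel₀ hh1.ne' (by linarith : (k : ℝ) * h1 = (m : ℝ) * h1)
    exact hkm (by exact_mod_cast hkm')
  have hx2' : ∀ k m : ℤ, k ≠ m → x2 k ≠ x2 m := by
    intro k m hkm h
    rw [hx2, hx2] at h
    have hkm' : (k : ℝ) = m :=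
      mul_right_cancel₀ hh2.ne' (by linarith : (k : ℝ) * h2 = (m : ℝ) * h2)
    exact hkm (by exact_mod_cast hkm')
  have hu1 : ∀ m : ℤ, m1 ≠ x1 m := by
    intro m h
    rw [hm1, hx1] at h
    have h' : (i1 : ℝ) - 1 / 2 = m :=
      mul_right_cancel₀ hh1.ne' (by linarith : ((i1 : ℝ) - 1 / 2) * h1 = (m : ℝ) * h1)
    have h2' : (2 * i1 : ℝ) = 2 * m + 1 := by push_cast; linarith
    have h3 : (2 * i1 : ℤ) = 2 * m + 1 := by exact_mod_cast h2'
    omega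
  have hu2 : ∀ m : ℤ, m2 ≠ x2 m := by
    intro m h
    rw [hm2, hx2] at h
    have h' : (i2 : ℝ) - 1 / 2 = m :=
      mul_right_cancel₀ hh2.ne' (by linarith : ((i2 : ℝ) - 1 / 2) * h2 = (m : ℝ) * h2)
    have h2' : (2 * i2 : ℝ) = 2 * m + 1 := by push_cast; linarith
    have h3 : (2 * i2 : ℤ) = 2 * m + 1 := by exact_mod_cast h2'
    omega
  have hAB1 : i1 - r + j1 < i1 - r + j1 + l + 1 := by omega
  have hAB2 : i2 - r + j2 < i2 - r + j2 + l + 1 := by omega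
  have hlpos : (0 : ℝ) < (l : ℝ) + 1 := by
    have : (0 : ℤ) < l + 1 := by omega
    exact_mod_cast this
  have hlne : (l : ℝ) + 1 ≠ 0 := hlpos.ne'
  have hd1 : x1 (i1 - r + j1 + l + 1) - x1 (i1 - r + j1) = ((l : ℝ) + 1) * h1 := by
    rw [hx1, hx1]; push_cast; ring
  have hd2 : x2 (i2 - r + j2 + l + 1) - x2 (i2 - r + j2) = ((l : ℝ) + 1) * h2 := by
    rw [hx2, hx2]; push_cast; ring
  have hα1 : (x1 (i1 - r + j1 + l + 1) - m1) / (x1 (i1 - r + j1 + l + 1) - x1 (i1 - r + j1))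
      = (2 * ((l : ℝ) - r + j1 + 1) + 1) / (2 * ((l : ℝ) + 1)) := by
    rw [hd1]
    have hn : x1 (i1 - r + j1 + l + 1) - m1 = ((l : ℝ) - r + j1 + 1 + 1 / 2) * h1 := by
      rw [hx1, hm1]; push_cast; ring
    rw [hn]
    field_simp
  have hβ1 : (m1 - x1 (i1 - r + j1)) / (x1 (i1 - r + j1 + l + 1) - x1 (i1 - r + j1))
      = (2 * ((r : ℝ) - j1) - 1) / (2 * ((l : ℝ) + 1)) := by
    rw [hd1]
    have hn : m1 - x1 (i1 - r + j1) = ((r : ℝ) - j1 - 1 / 2) * h1 := by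
      rw [hx1, hm1]; push_cast; ring
    rw [hn]
    field_simp
  have hα2 : (x2 (i2 - r + j2 + l + 1) - m2) / (x2 (i2 - r + j2 + l + 1) - x2 (i2 - r + j2))
      = (2 * ((l : ℝ) - r + j2 + 1) + 1) / (2 * ((l : ℝ) + 1)) := by
    rw [hd2]
    have hn : x2 (i2 - r + j2 + l + 1) - m2 = ((l : ℝ) - r + j2 + 1 + 1 / 2) * h2 := by
      rw [hx2, hm2]; push_cast; ring
    rw [hn]
    field_simp
  have hβ2 : (m2 - x2 (i2 - r + j2)) / (x2 (i2 - r + j2 + l + 1) - x2 (i2 - r + j2))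
      = (2 * ((r : ℝ) - j2) - 1) / (2 * ((l : ℝ) + 1)) := by
    rw [hd2]
    have hn : m2 - x2 (i2 - r + j2) = ((r : ℝ) - j2 - 1 / 2) * h2 := by
      rw [hx2, hm2]; push_cast; ring
    rw [hn]
    field_simp
  rw [tlag2_eq, tlag2_eq, tlag2_eq, tlag2_eq, tlag2_eq]
  rw [neville (i1 - r + j1) (i1 - r + j1 + l + 1) hAB1 x1 hx1' m1 hu1]
  have hsub1 : i1 - r + j1 + l + 1 - 1 = i1 - r + j1 + l := by ring
  rw [hsub1]
  have hsub2 : i2 - r + j2 + l + 1 - 1 = i2 - r + j2 + l := by ring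
  have hg : (fun k1 : ℤ => lag1 (Finset.Icc (i2 - r + j2) (i2 - r + j2 + l + 1)) x2
        (fun k2 => f (x1 k1) (x2 k2)) m2)
      = fun k1 : ℤ =>
          (x2 (i2 - r + j2 + l + 1) - m2) / (x2 (i2 - r + j2 + l + 1) - x2 (i2 - r + j2)) *
            lag1 (Finset.Icc (i2 - r + j2) (i2 - r + j2 + l)) x2
              (fun k2 => f (x1 k1) (x2 k2)) m2
          + (m2 - x2 (i2 - r + j2)) / (x2 (i2 - r + j2 + l + 1) - x2 (i2 - r + j2)) *
            lag1 (Finset.Icc (i2 - r + j2 + 1) (i2 - r + j2 + l + 1)) x2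
              (fun k2 => f (x1 k1) (x2 k2)) m2 := by
    funext k1
    rw [neville (i2 - r + j2) (i2 - r + j2 + l + 1) hAB2 x2 hx2' m2 hu2, hsub2]
  rw [hg, lag1_linear, lag1_linear, hα1, hβ1, hα2, hβ2]
  ring
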